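/- (Lemma 3.) Let m₁, …, m_d be positive integers and let i, j ∈ [d]. For any two arrays X of size (m₁+δ₁(i)) × ⋯ × (m_d+δ_d(i)) and Y of size (m₁+δ₁(j)) × ⋯ × (m_d+δ_d(j)) over Σ_q, where δ_ℓ(i) = 1 if ℓ = i and 0 otherwise, it holds that D_{e_i}(X) ∩ D_{e_j}(Y) ≠ ∅ if and only if I_{e_j}(X) ∩ I_{e_i}(Y) ≠ ∅. -/

import Mathlib

/-!
A single `x_i`-insertion `Z → X` is the same as `Z = X.deleteAt i k` for a hyperplane position
`k`. Deleting a hyperplane along `i` and one along `j` commutes (up to shifting the second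
position when `i = j`), so two arrays `X = W.deleteAt j l`, `Y = W.deleteAt i k` have the common
deletion `X.deleteAt i k = Y.deleteAt j l`. Conversely, if `X` and `Y` share the deletion `Z`,
gluing `X` and `Y` along `Z` gives a common insertion `W`; for `i ≠ j` one entry of `W`, where
the two new hyperplanes cross, is free and is filled with an arbitrary symbol.
-/

/-- A `q`-ary `d`-dimensional array: a size vector `size : Fin d → ℕ` together with an
entry of the alphabet `Fin q` for every index tuple inside the box
`[size 0] × ⋯ × [size (d-1)]`. -/
structure Arr (q d : ℕ) where
  size : Fin d → ℕ
  val : ∀ x : Fin d → ℕ, (∀ i, x i < size i) → Fin q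

/-- The index map associated with inserting a hyperplane at position `k` along axis `i`:
coordinates below `k` stay put, the others are shifted up by one (so that position `k`
along axis `i` is the freshly inserted hyperplane). -/
def insIdx {d : ℕ} (i : Fin d) (k : ℕ) (x : Fin d → ℕ) : Fin d → ℕ :=
  fun j => if j = i then (if x i < k then x i else x i + 1) else x j

/-- `InsertsTo i A B`: the array `B` is obtained from the array `A` by a single
`x_i`-insertion, i.e. by inserting one `(d-1)`-dimensional hyperplane (with arbitrary
entries) orthogonal to the `x_i`-axis. -/
def InsertsTo {q d : ℕ} (i : Fin d) (A B : Arr q d) : Prop :=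
  (∀ j, B.size j = if j = i then A.size j + 1 else A.size j) ∧
  ∃ k ≤ A.size i, ∀ (x : Fin d → ℕ) (hx : ∀ j, x j < A.size j)
    (hx' : ∀ j, insIdx i k x j < B.size j),
    A.val x hx = B.val (insIdx i k x) hx'

/-- `DeletesTo i A B`: the array `B` is obtained from `A` by a single `x_i`-deletion,
the inverse operation of an `x_i`-insertion. -/
def DeletesTo {q d : ℕ} (i : Fin d) (A B : Arr q d) : Prop :=
  InsertsTo i B A

/-- `Steps R t A B`: the array `B` is obtained from the array `A` by performing, for each
axis `i`, exactly `t i` operations of type `R i` (in some order). -/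
inductive Steps {q d : ℕ} (R : Fin d → Arr q d → Arr q d → Prop) :
    (Fin d → ℕ) → Arr q d → Arr q d → Prop
  | refl (A : Arr q d) : Steps R 0 A A
  | step {t : Fin d → ℕ} {A B C : Arr q d} (i : Fin d) :
      R i A B → Steps R t B C → Steps R (t + Pi.single i 1) A C

/-- The deletion ball `D_t(X)`: all arrays obtainable from `X` by a `t`-deletion,
i.e. by `t i` `x_i`-deletions for each axis `i`. -/
def delBall {q d : ℕ} (t : Fin d → ℕ) (X : Arr q d) : Set (Arr q d) :=
  {Y | Steps DeletesTo t X Y}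

/-- The insertion ball `I_t(X)`: all arrays obtainable from `X` by a `t`-insertion,
i.e. by `t i` `x_i`-insertions for each axis `i`. -/
def insBall {q d : ℕ} (t : Fin d → ℕ) (X : Arr q d) : Set (Arr q d) :=
  {Y | Steps InsertsTo t X Y}

/-- The insertion-deletion ball `ID_t(X)`: all arrays obtainable from `X` by a
`t^del`-deletion followed by a `t^ins`-insertion, for some decomposition
`t = t^ins + t^del`. -/
def insDelBall {q d : ℕ} (t : Fin d → ℕ) (X : Arr q d) : Set (Arr q d) :=
  {Z | ∃ tins tdel : Fin d → ℕ, tins + tdel = t ∧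
    ∃ W ∈ delBall tdel X, Z ∈ insBall tins W}

/-- `Σ_q^{n^{⊗d}}`: the set of `q`-ary `d`-dimensional arrays of cubic size `n × ⋯ × n`. -/
def cube (q d n : ℕ) : Set (Arr q d) := {A | A.size = fun _ => n}

/-- A code `C` is a `t`-deletion-correcting code if the deletion balls `D_t(X)`, `X ∈ C`,
are pairwise disjoint. -/
def IsDelCode {q d : ℕ} (t : Fin d → ℕ) (C : Set (Arr q d)) : Prop :=
  ∀ X ∈ C, ∀ Y ∈ C, X ≠ Y → delBall t X ∩ delBall t Y = ∅

/-- A code `C` is a `t`-insertion-correcting code if the insertion balls `I_t(X)`,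
`X ∈ C`, are pairwise disjoint. -/
def IsInsCode {q d : ℕ} (t : Fin d → ℕ) (C : Set (Arr q d)) : Prop :=
  ∀ X ∈ C, ∀ Y ∈ C, X ≠ Y → insBall t X ∩ insBall t Y = ∅

/-- A code `C` is a `t`-insdel-correcting code if the insertion-deletion balls `ID_t(X)`,
`X ∈ C`, are pairwise disjoint. -/
def IsInsDelCode {q d : ℕ} (t : Fin d → ℕ) (C : Set (Arr q d)) : Prop :=
  ∀ X ∈ C, ∀ Y ∈ C, X ≠ Y → insDelBall t X ∩ insDelBall t Y = ∅

section Index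

variable {d : ℕ} {i j : Fin d} {k l : ℕ} {x : Fin d → ℕ}

def delIdx (i : Fin d) (k : ℕ) (x : Fin d → ℕ) : Fin d → ℕ :=
  fun j => if j = i then (if x i < k then x i else x i - 1) else x j

@[simp] theorem insIdx_of_ne (h : j ≠ i) : insIdx i k x j = x j := by simp [insIdx, h]

theorem insIdx_self_ne : insIdx i k x i ≠ k := by
  simp only [insIdx]; split_ifs <;> omega

theorem insIdx_lt {s : Fin d → ℕ} (hx : ∀ ℓ, x ℓ < if ℓ = i then s ℓ - 1 else s ℓ) (ℓ : Fin d) :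
    insIdx i k x ℓ < s ℓ := by
  have := hx ℓ
  unfold insIdx; split_ifs at this ⊢ <;> subst_vars <;> omega

@[simp] theorem delIdx_insIdx : delIdx i k (insIdx i k x) = x := by
  funext ℓ
  by_cases h : ℓ = i
  · subst h; simp only [delIdx, insIdx]; split_ifs <;> omega
  · simp [delIdx, insIdx, h]

theorem insIdx_delIdx (h : x i ≠ k) : insIdx i k (delIdx i k x) = x := by
  funext ℓ
  by_cases hℓ : ℓ = i
  · subst hℓ; simp only [insIdx, delIdx]; split_ifs <;> omega
  · simp [insIdx, delIdx, hℓ]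

theorem insIdx_comm (hij : i ≠ j) : insIdx i k (insIdx j l x) = insIdx j l (insIdx i k x) := by
  funext ℓ
  by_cases h1 : ℓ = i <;> by_cases h2 : ℓ = j <;> simp_all [insIdx, Ne.symm hij]

theorem delIdx_insIdx_of_ne (hij : i ≠ j) :
    delIdx j l (insIdx i k x) = insIdx i k (delIdx j l x) := by
  funext ℓ
  by_cases h1 : ℓ = i <;> by_cases h2 : ℓ = j <;> simp_all [insIdx, delIdx, Ne.symm hij]

theorem delIdx_succ_insIdx (hkl : k ≤ l) (h : x i ≠ l) :
    delIdx i (l + 1) (insIdx i k x) = insIdx i k (delIdx i l x) := by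
  funext ℓ
  by_cases hℓ : ℓ = i
  · subst hℓ; simp only [insIdx, delIdx]; split_ifs <;> omega
  · simp [insIdx, delIdx, hℓ]

theorem insIdx_insIdx_of_lt (hkl : k < l) :
    insIdx i l (insIdx i k x) = insIdx i k (insIdx i (l - 1) x) := by
  funext ℓ
  by_cases hℓ : ℓ = i
  · subst hℓ; simp only [insIdx]; split_ifs <;> omega
  · simp [insIdx, hℓ]

end Index

namespace Arr

variable {q d : ℕ}

@[ext] theorem ext {A B : Arr q d} (hsize : A.size = B.size)
    (hval : ∀ x hA hB, A.val x hA = B.val x hB) : A = B := by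
  cases A; cases B; subst hsize; congr; funext x hx; exact hval x hx hx

theorem val_congr (A : Arr q d) {x y : Fin d → ℕ} (h : x = y) (hx : ∀ ℓ, x ℓ < A.size ℓ)
    (hy : ∀ ℓ, y ℓ < A.size ℓ) : A.val x hx = A.val y hy := by
  subst h; rfl

def deleteAt (B : Arr q d) (i : Fin d) (k : ℕ) : Arr q d where
  size ℓ := if ℓ = i then B.size ℓ - 1 else B.size ℓ
  val x hx := B.val (insIdx i k x) (insIdx_lt hx)

@[simp] theorem deleteAt_size (B : Arr q d) (i : Fin d) (k : ℕ) (ℓ : Fin d) :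
    (B.deleteAt i k).size ℓ = if ℓ = i then B.size ℓ - 1 else B.size ℓ := rfl

theorem deleteAt_val (B : Arr q d) (i : Fin d) (k : ℕ) (x : Fin d → ℕ) hx :
    (B.deleteAt i k).val x hx = B.val (insIdx i k x) (insIdx_lt hx) := rfl

theorem deleteAt_comm (B : Arr q d) {i j : Fin d} (hij : i ≠ j) (k l : ℕ) :
    (B.deleteAt i k).deleteAt j l = (B.deleteAt j l).deleteAt i k := by
  ext1
  · funext ℓ; simp only [deleteAt_size]; split_ifs <;> simp_all
  · exact B.val_congr (insIdx_comm hij) _ _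

theorem deleteAt_deleteAt_of_lt (B : Arr q d) (i : Fin d) {k l : ℕ} (hkl : k < l) :
    (B.deleteAt i l).deleteAt i k = (B.deleteAt i k).deleteAt i (l - 1) := by
  ext1
  · rfl
  · exact B.val_congr (insIdx_insIdx_of_lt hkl) _ _

def get [NeZero q] (A : Arr q d) (x : Fin d → ℕ) : Fin q :=
  if h : ∀ ℓ, x ℓ < A.size ℓ then A.val x h else 0

theorem get_of_lt [NeZero q] (A : Arr q d) {x : Fin d → ℕ} (h : ∀ ℓ, x ℓ < A.size ℓ) :
    A.get x = A.val x h := dif_pos h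

theorem get_deleteAt [NeZero q] {B : Arr q d} {i : Fin d} {k : ℕ} (hk : k < B.size i)
    (x : Fin d → ℕ) : (B.deleteAt i k).get x = B.get (insIdx i k x) := by
  have hbox : (∀ ℓ, x ℓ < (B.deleteAt i k).size ℓ) ↔ ∀ ℓ, insIdx i k x ℓ < B.size ℓ := by
    refine forall_congr' fun ℓ => ?_
    by_cases hℓ : ℓ = i
    · subst hℓ; simp only [deleteAt_size, insIdx]; split_ifs <;> omega
    · simp [hℓ]
  by_cases h : ∀ ℓ, x ℓ < (B.deleteAt i k).size ℓ
  · rw [get_of_lt _ h, get_of_lt _ (hbox.1 h), deleteAt_val]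
  · rw [get, dif_neg h, get, dif_neg (hbox.not.1 h)]

end Arr

section Insertion

open Arr

variable {q d : ℕ}

theorem insertsTo_iff_exists_deleteAt {i : Fin d} {A B : Arr q d} :
    InsertsTo i A B ↔ ∃ k < B.size i, A = B.deleteAt i k := by
  constructor
  · rintro ⟨hsize, k, hk, hval⟩
    have hBi := hsize i
    rw [if_pos rfl] at hBi
    refine ⟨k, by omega, Arr.ext (funext fun ℓ => ?_) fun x hA hB => hval x hA _⟩
    have := hsize ℓ
    simp only [deleteAt_size]
    split_ifs at this ⊢ <;> omega
  · rintro ⟨k, hk, rfl⟩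
    refine ⟨fun ℓ => ?_, k, ?_, fun x hx hx' => rfl⟩
    · simp only [deleteAt_size]; split_ifs <;> subst_vars <;> omega
    · simp only [deleteAt_size, ite_true]; omega

theorem Steps.eq_of_zero {R : Fin d → Arr q d → Arr q d → Prop} {A B : Arr q d}
    (h : Steps R 0 A B) : A = B := by
  generalize ht : (0 : Fin d → ℕ) = t at h
  cases h with
  | refl => rfl
  | step i _ _ => simpa using congrFun ht i

theorem steps_single_iff {R : Fin d → Arr q d → Arr q d → Prop} {i : Fin d} {A B : Arr q d} :
    Steps R (Pi.single i 1) A B ↔ R i A B := by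
  refine ⟨fun h => ?_, fun h => by simpa using Steps.step i h (Steps.refl B)⟩
  generalize ht : (Pi.single i 1 : Fin d → ℕ) = t at h
  cases h with
  | refl => simpa using congrFun ht i
  | @step t' _ B' _ i' hAB' hB' =>
    obtain rfl : i' = i := by
      by_contra hne
      simpa [Pi.single_apply, hne] using congrFun ht i'
    obtain rfl : t' = 0 := add_eq_right.mp ht.symm
    exact hB'.eq_of_zero ▸ hAB'

theorem exists_common_deletion {i j : Fin d} {X Y W : Arr q d} (hX : 0 < X.size i)
    (hXW : InsertsTo j X W) (hYW : InsertsTo i Y W) :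
    ∃ Z, InsertsTo i Z X ∧ InsertsTo j Z Y := by
  obtain ⟨l, hl, rfl⟩ := insertsTo_iff_exists_deleteAt.1 hXW
  obtain ⟨k, hk, rfl⟩ := insertsTo_iff_exists_deleteAt.1 hYW
  by_cases hij : i = j
  · subst hij
    clear hXW hYW
    wlog hkl : k ≤ l generalizing k l
    · obtain ⟨Z, hZY, hZX⟩ := this k l hl hk hX (by omega)
      exact ⟨Z, hZX, hZY⟩
    obtain rfl | hkl := hkl.eq_or_lt
    · exact ⟨_, insertsTo_iff_exists_deleteAt.2 ⟨0, hX, rfl⟩,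
        insertsTo_iff_exists_deleteAt.2 ⟨0, hX, rfl⟩⟩
    · refine ⟨_, insertsTo_iff_exists_deleteAt.2 ⟨k, ?_, rfl⟩,
        insertsTo_iff_exists_deleteAt.2 ⟨l - 1, ?_, W.deleteAt_deleteAt_of_lt i hkl⟩⟩
        <;> simp only [deleteAt_size, ite_true] <;> omega
  · refine ⟨_, insertsTo_iff_exists_deleteAt.2 ⟨k, ?_, rfl⟩,
      insertsTo_iff_exists_deleteAt.2 ⟨l, ?_, (W.deleteAt_comm hij k l).symm⟩⟩
      <;> simpa [hij, Ne.symm hij]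

theorem exists_common_insertion_of_ne [NeZero q] {i j : Fin d} (hij : i ≠ j) {X Y : Arr q d}
    {k l : ℕ} (hk : k < X.size i) (hl : l < Y.size j) (hXY : X.deleteAt i k = Y.deleteAt j l) :
    ∃ W, InsertsTo j X W ∧ InsertsTo i Y W := by
  have hsize (ℓ : Fin d) : (X.deleteAt i k).size ℓ = (Y.deleteAt j l).size ℓ := by rw [hXY]
  simp only [deleteAt_size] at hsize
  -- `W` is `X` off the new hyperplane `y j = l` and `Y` on it; the corner `y i = k` lies in
  -- neither, so it gets an arbitrary symbol.
  let W : Arr q d :=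
    ⟨fun ℓ => if ℓ = j then X.size ℓ + 1 else X.size ℓ, fun y _ =>
      if y j ≠ l then X.get (delIdx j l y) else if y i ≠ k then Y.get (delIdx i k y) else 0⟩
  refine ⟨W, insertsTo_iff_exists_deleteAt.2 ⟨l, ?_, ?_⟩,
    insertsTo_iff_exists_deleteAt.2 ⟨k, ?_, ?_⟩⟩
  · have := hsize j
    simp only [W, Ne.symm hij, ↓reduceIte] at this ⊢
    omega
  · refine Arr.ext (funext fun ℓ => ?_) fun x hX hW => ?_
    · simp only [deleteAt_size, W]; split_ifs <;> omega
    · simp [deleteAt_val, W, insIdx_self_ne, get_of_lt _ hX]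
  · have := hsize i
    simp only [W, hij, ↓reduceIte] at this ⊢
    omega
  · refine Arr.ext (funext fun ℓ => ?_) fun y hY hW => ?_
    · have := hsize ℓ; simp only [deleteAt_size, W]; split_ifs at this ⊢ <;> subst_vars <;> omega
    · rw [deleteAt_val, ← get_of_lt _ hY]
      by_cases hyl : y j = l
      · simp [W, insIdx_of_ne (Ne.symm hij), hyl, insIdx_self_ne]
      · have hyl' : insIdx i k y j ≠ l := by rwa [insIdx_of_ne (Ne.symm hij)]
        simp only [W, hyl', ne_eq, not_false_eq_true, if_true]
        rw [delIdx_insIdx_of_ne hij, ← get_deleteAt hk, hXY, get_deleteAt hl, insIdx_delIdx hyl]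

theorem exists_common_insertion_of_le [NeZero q] {i : Fin d} {X Y : Arr q d} {k l : ℕ}
    (hkl : k ≤ l) (hk : k < X.size i) (hl : l < Y.size i) (hXY : X.deleteAt i k = Y.deleteAt i l) :
    ∃ W, InsertsTo i X W ∧ InsertsTo i Y W := by
  have hsize (ℓ : Fin d) : (X.deleteAt i k).size ℓ = (Y.deleteAt i l).size ℓ := by rw [hXY]
  simp only [deleteAt_size] at hsize
  -- `Y`'s hyperplane `l` lands at position `l + 1` of `W`, behind `X`'s hyperplane `k ≤ l`.
  let W : Arr q d :=
    ⟨fun ℓ => if ℓ = i then X.size ℓ + 1 else X.size ℓ, fun y _ =>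
      if y i = l + 1 then Y.get (delIdx i k y) else X.get (delIdx i (l + 1) y)⟩
  refine ⟨W, insertsTo_iff_exists_deleteAt.2 ⟨l + 1, ?_, ?_⟩,
    insertsTo_iff_exists_deleteAt.2 ⟨k, ?_, ?_⟩⟩
  · have := hsize i
    simp only [W, ↓reduceIte] at this ⊢
    omega
  · refine Arr.ext (funext fun ℓ => ?_) fun x hX hW => ?_
    · simp only [deleteAt_size, W]; split_ifs <;> omega
    · simp [deleteAt_val, W, insIdx_self_ne, get_of_lt _ hX]
  · simp only [W, ↓reduceIte]
    omega
  · refine Arr.ext (funext fun ℓ => ?_) fun y hY hW => ?_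
    · have := hsize ℓ; simp only [deleteAt_size, W]; split_ifs at this ⊢ <;> subst_vars <;> omega
    · rw [deleteAt_val, ← get_of_lt _ hY]
      by_cases hyl : y i = l
      · have : insIdx i k y i = l + 1 := by simp only [insIdx]; split_ifs <;> omega
        simp [W, this]
      · have : insIdx i k y i ≠ l + 1 := by simp only [insIdx]; split_ifs <;> omega
        simp only [W, this, if_false]
        rw [delIdx_succ_insIdx hkl hyl, ← get_deleteAt hk, hXY, get_deleteAt hl, insIdx_delIdx hyl]

theorem exists_common_insertion [NeZero q] {i j : Fin d} {X Y Z : Arr q d}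
    (hZX : InsertsTo i Z X) (hZY : InsertsTo j Z Y) :
    ∃ W, InsertsTo j X W ∧ InsertsTo i Y W := by
  obtain ⟨k, hk, rfl⟩ := insertsTo_iff_exists_deleteAt.1 hZX
  obtain ⟨l, hl, hXY⟩ := insertsTo_iff_exists_deleteAt.1 hZY
  by_cases hij : i = j
  · subst hij
    rcases le_total k l with hkl | hlk
    · exact exists_common_insertion_of_le hkl hk hl hXY
    · obtain ⟨W, hYW, hXW⟩ := exists_common_insertion_of_le hlk hl hk hXY.symm
      exact ⟨W, hXW, hYW⟩
  · exact exists_common_insertion_of_ne hij hk hl hXY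

end Insertion

theorem statement5_general (q d : ℕ) (hq : 2 ≤ q)
    (m : Fin d → ℕ) (i j : Fin d)
    (X Y : Arr q d)
    (hX : X.size = fun ℓ => m ℓ + if ℓ = i then 1 else 0) :
    (delBall (Pi.single i 1) X ∩ delBall (Pi.single j 1) Y).Nonempty ↔
    (insBall (Pi.single j 1) X ∩ insBall (Pi.single i 1) Y).Nonempty := by
  have : NeZero q := ⟨by omega⟩
  have hXi : 0 < X.size i := by simp [hX]
  simp only [Set.Nonempty, Set.mem_inter_iff, delBall, insBall, Set.mem_ofPred_eq, steps_single_iff,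
    DeletesTo]
  exact ⟨fun ⟨_, hZX, hZY⟩ => exists_common_insertion hZX hZY,
    fun ⟨_, hXW, hYW⟩ => exists_common_deletion hXi hXW hYW⟩

/-- **Lemma 3.** For positive integers `m₁, …, m_d` and `i, j ∈ [d]`, and any arrays
`X` of size `(m₁+δ₁(i)) × ⋯ × (m_d+δ_d(i))` and `Y` of size `(m₁+δ₁(j)) × ⋯ × (m_d+δ_d(j))`,
`D_{e_i}(X) ∩ D_{e_j}(Y) ≠ ∅ ↔ I_{e_j}(X) ∩ I_{e_i}(Y) ≠ ∅`. -/
theorem statement5 (q d : ℕ) (hq : 2 ≤ q) (hd : 1 ≤ d)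
    (m : Fin d → ℕ) (hm : ∀ ℓ, 0 < m ℓ) (i j : Fin d)
    (X Y : Arr q d)
    (hX : X.size = fun ℓ => m ℓ + if ℓ = i then 1 else 0)
    (hY : Y.size = fun ℓ => m ℓ + if ℓ = j then 1 else 0) :
    (delBall (Pi.single i 1) X ∩ delBall (Pi.single j 1) Y).Nonempty ↔
    (insBall (Pi.single j 1) X ∩ insBall (Pi.single i 1) Y).Nonempty :=
  statement5_general q d hq m i j X Y hX
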